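/- arXiv:1511.02792 — 3 statements merged into one kernel-verified Lean document; each statement's English description precedes it below -/
import Mathlib

section
/- Let zeta = (eta, xi) be a C^r critical commuting pair (r >= 1). Then there exist open intervals V_- containing I_xi and V_+ containing I_eta, and C^r homeomorphisms xi-hat : V_- -> xi-hat(V_-) ⊂ R extending xi and eta-hat : V_+ -> eta-hat(V_+) ⊂ R extending eta, such that (eta-hat ∘ xi-hat)(x) = (xi-hat ∘ eta-hat)(x) for all x in the set C = { x in V_- ∩ V_+ : eta-hat(x) in V_- and xi-hat(x) in V_+ }, which is an open interval containing the origin. -/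
/-!
Extend `ξ` to the left of `η 0` and `η` to the right of `ξ 0` by gluing on their Taylor
polynomials of order `r`. Because the one-sided jets of `η ∘ ξ` and `ξ ∘ η` agree at `0`, the map
`F` equal to `η ∘ ξ` left of `0` and to `ξ ∘ η` right of `0` is `C^r` near `0`. The derivatives of
`η` at `ξ 0` and of `ξ` at `η 0` are positive, so by the inverse function theorem `ξ` continues to
the right of `0` as `η⁻¹ ∘ F` and `η` continues to the left of `0` as `ξ⁻¹ ∘ F`; near `0` both
compositions of the extended maps then equal `F`.
-/

open Set Filter Topology

/-- A (critical commuting) pair of interval maps, modelled as total real functions;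
`eta` is defined on `[0, xi 0]` and `xi` on `[eta 0, 0]`. -/
structure CritPair where
  eta : ℝ → ℝ
  xi : ℝ → ℝ

/-- The `C^r` norm of `f` on a set `s` (supremum of the absolute values of the
iterated derivatives within `s` of order `≤ r`). -/
noncomputable def crNormOn (r : ℕ) (f : ℝ → ℝ) (s : Set ℝ) : ℝ :=
  sSup {y : ℝ | ∃ j ≤ r, ∃ x ∈ s, y = |iteratedDerivWithin j f s x|}

/-- `z` is a `C^r` critical commuting pair whose critical point (the origin) has odd
type `2d+1`. -/
def IsCritPair (r d : ℕ) (z : CritPair) : Prop :=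
  1 ≤ d ∧ z.eta 0 < 0 ∧ 0 < z.xi 0 ∧
  ContDiffOn ℝ r z.eta (Icc 0 (z.xi 0)) ∧
  ContDiffOn ℝ r z.xi (Icc (z.eta 0) 0) ∧
  StrictMonoOn z.eta (Icc 0 (z.xi 0)) ∧
  StrictMonoOn z.xi (Icc (z.eta 0) 0) ∧
  (∀ x ∈ Icc 0 (z.xi 0), x ≠ 0 → 0 < deriv z.eta x) ∧
  (∀ x ∈ Icc (z.eta 0) 0, x ≠ 0 → 0 < deriv z.xi x) ∧
  z.eta (z.xi 0) = z.xi (z.eta 0) ∧ z.eta (z.xi 0) ≠ 0 ∧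
  (∃ e : ℝ, 0 < e ∧ ∃ phi psi : ℝ → ℝ,
    ContDiffOn ℝ r phi (Ioo (-e) e) ∧ ContDiffOn ℝ r psi (Ioo (-e) e) ∧
    phi 0 = 0 ∧ psi 0 = 0 ∧
    (∀ x ∈ Ioo (-e) e, 0 < deriv phi x) ∧ (∀ x ∈ Ioo (-e) e, 0 < deriv psi x) ∧
    (∀ x ∈ Ioo (-e) e, z.eta x = phi x ^ (2 * d + 1) + z.eta 0) ∧
    (∀ x ∈ Ioo (-e) e, z.xi x = psi x ^ (2 * d + 1) + z.xi 0)) ∧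
  (∀ j : ℕ, 1 ≤ j → j ≤ r →
    iteratedDerivWithin j (z.eta ∘ z.xi) (Iic 0) 0 =
      iteratedDerivWithin j (z.xi ∘ z.eta) (Ici 0) 0)

/-- Case I period: `(xi ∘ eta)(0) ∈ I_eta` and `eta^[a+1](xi 0) < 0 ≤ eta^[a](xi 0)`. -/
def PeriodI (z : CritPair) (a : ℕ) : Prop :=
  z.eta^[a + 1] (z.xi 0) < 0 ∧ 0 ≤ z.eta^[a] (z.xi 0)

/-- Case II period (symmetric). -/
def PeriodII (z : CritPair) (a : ℕ) : Prop :=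
  0 < z.xi^[a + 1] (z.eta 0) ∧ z.xi^[a] (z.eta 0) ≤ 0

/-- `z` is renormalizable with period `a`. -/
def PeriodOf (z : CritPair) (a : ℕ) : Prop :=
  (0 < z.eta (z.xi 0) ∧ PeriodI z a) ∨ (z.eta (z.xi 0) < 0 ∧ PeriodII z a)

/-- Conjugation of a pair by the homothety `x ↦ c * x`. -/
noncomputable def rescale (c : ℝ) (z : CritPair) : CritPair :=
  ⟨fun x => z.eta (c * x) / c, fun x => z.xi (c * x) / c⟩

/-- Pre-renormalization in case I. -/
def preRenormI (z : CritPair) (a : ℕ) : CritPair :=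
  ⟨z.eta, fun x => z.eta^[a] (z.xi x)⟩

/-- Pre-renormalization in case II. -/
def preRenormII (z : CritPair) (a : ℕ) : CritPair :=
  ⟨fun x => z.xi^[a] (z.eta x), z.xi⟩

open scoped Classical in
/-- The pre-renormalization operator (the identity on non-renormalizable pairs). -/
noncomputable def preRenormOp (z : CritPair) : CritPair :=
  if h : ∃ a, PeriodOf z a then
    if 0 < z.eta (z.xi 0) then preRenormI z h.choose else preRenormII z h.choose
  else z

/-- The renormalization operator: pre-renormalize, then rescale so that the new
`xi`-interval becomes `[-1, 0]`. -/
noncomputable def renormOp (z : CritPair) : CritPair :=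
  rescale |(preRenormOp z).eta 0| (preRenormOp z)

/-- Renormalization with a prescribed period, in case I. -/
noncomputable def renormI (z : CritPair) (a : ℕ) : CritPair :=
  rescale |z.eta 0| (preRenormI z a)

/-- The Möbius transformation sending `u ↦ -1`, `0 ↦ 0`, `v ↦ 1`. -/
noncomputable def mob (u v x : ℝ) : ℝ := x * (v - u) / ((u + v) * x - 2 * u * v)

/-- The inverse of `mob u v`. -/
noncomputable def mobInv (u v y : ℝ) : ℝ := 2 * u * v * y / ((u + v) * y - (v - u))

/-- The `eta`-branch of `z` conjugated by the Möbius normalization. -/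
noncomputable def conjEta (z : CritPair) : ℝ → ℝ :=
  fun x => mob (z.eta 0) (z.xi 0) (z.eta (mobInv (z.eta 0) (z.xi 0) x))

/-- The `xi`-branch of `z` conjugated by the Möbius normalization. -/
noncomputable def conjXi (z : CritPair) : ℝ → ℝ :=
  fun x => mob (z.eta 0) (z.xi 0) (z.xi (mobInv (z.eta 0) (z.xi 0) x))

/-- The `C^r` distance `d_r` on critical commuting pairs. -/
noncomputable def cDist (r : ℕ) (z1 z2 : CritPair) : ℝ :=
  max |z1.xi 0 / z1.eta 0 - z2.xi 0 / z2.eta 0|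
    (max (crNormOn r (fun x => conjXi z1 x - conjXi z2 x) (Icc (-1) 0))
      (crNormOn r (fun x => conjEta z1 x - conjEta z2 x) (Icc 0 1)))

/-- A pair is normalized if `eta 0 = -1`. -/
def Normalized (z : CritPair) : Prop := z.eta 0 = -1

/-- The Schwarzian derivative. -/
noncomputable def schwarzian (f : ℝ → ℝ) (x : ℝ) : ℝ :=
  iteratedDeriv 3 f x / deriv f x - 3 / 2 * (iteratedDeriv 2 f x / deriv f x) ^ 2

/-- The pair has negative Schwarzian derivative. -/
def NegSchwarzian (z : CritPair) : Prop :=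
  (∀ x ∈ Icc 0 (z.xi 0), x ≠ 0 → schwarzian z.eta x < 0) ∧
  (∀ x ∈ Icc (z.eta 0) 0, x ≠ 0 → schwarzian z.xi x < 0)

/-- A normalized pair which is renormalizable with period `a` is `K`-controlled. -/
def KControlled (K : ℝ) (z : CritPair) (a : ℕ) : Prop :=
  1 / K ≤ z.xi 0 ∧ z.xi 0 ≤ K ∧
  1 / K ≤ z.xi 0 - z.eta (z.xi 0) ∧
  1 / K ≤ z.eta^[a - 1] (z.xi 0) - z.eta^[a] (z.xi 0) ∧
  1 / K ≤ z.eta^[a] (z.xi 0) ∧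
  z.eta^[a + 1] (z.xi 0) ≤ -(1 / K) ∧
  crNormOn 3 z.xi (Icc (-1) 0) ≤ K ∧
  crNormOn 3 z.eta (Icc 0 (z.xi 0)) ≤ K ∧
  ∀ x ∈ Icc (z.eta^[a] (z.xi 0)) (z.xi 0), 1 / K ≤ deriv z.eta x

/-- `z` is infinitely renormalizable. -/
def InfRenorm (z : CritPair) : Prop := ∀ n : ℕ, ∃ a, PeriodOf (renormOp^[n] z) a

/-- Two pairs have the same (irrational) rotation number: all the renormalization
periods coincide, i.e. the continued fraction expansions agree. -/
def SameRot (z0 z1 : CritPair) : Prop :=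
  ∀ n a, PeriodOf (renormOp^[n] z0) a ↔ PeriodOf (renormOp^[n] z1) a

/-- Two pairs, renormalizable with the same period `a`, are `L`-synchronized. -/
def Synchronized (L : ℝ) (z0 z1 : CritPair) (a : ℕ) : Prop :=
  |z1.eta^[a] (z1.xi 0) - z0.eta^[a] (z0.xi 0)| ≤ L * cDist 2 z0 z1

/-- The points `x_i = eta^[i](xi 0)`. -/
def xpt (z : CritPair) (i : ℕ) : ℝ := z.eta^[i] (z.xi 0)

/-- The diffeomorphism `f_i = A_{i+1}⁻¹ ∘ eta ∘ A_i : [0,1] → [0,1]`, where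
`A_i : [0,1] → [x_i, x_{i-1}]` is the orientation-preserving affine bijection. -/
noncomputable def fBranch (z : CritPair) (i : ℕ) : ℝ → ℝ :=
  fun x =>
    (z.eta ((xpt z (i - 1) - xpt z i) * x + xpt z i) - xpt z (i + 1)) /
      (xpt z i - xpt z (i + 1))

/-- The nonlinearity `Nf = f''/f'`. -/
noncomputable def nonlin (f : ℝ → ℝ) : ℝ → ℝ := fun x => iteratedDeriv 2 f x / deriv f x

/-- `sup_{x ∈ s} |f x - g x|`. -/
noncomputable def supAbsDiffOn (f g : ℝ → ℝ) (s : Set ℝ) : ℝ :=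
  sSup {y : ℝ | ∃ x ∈ s, y = |f x - g x|}

/-- The order `z0 ≤_t z1` on commuting pairs. -/
def OrderLE (t : ℝ) (z0 z1 : CritPair) : Prop :=
  (∀ x : ℝ, max (z0.eta 0) (z1.eta 0) ≤ x → x ≤ 0 → z0.xi x + t ≤ z1.xi x) ∧
  (∀ x : ℝ, 0 ≤ x → x ≤ min (z0.xi 0) (z1.xi 0) → z0.eta x + t ≤ z1.eta x) ∧
  z0.eta 0 ≤ z1.eta 0 ∧ z0.xi 0 ≤ z1.xi 0

section Glue

variable {f g : ℝ → ℝ} {u q v : ℝ}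

theorem eqOn_ite_le_Icc_left : EqOn (fun x => if x ≤ q then f x else g x) f (Icc u q) :=
  fun _ hx => if_pos hx.2

theorem eqOn_ite_le_Icc_right (h₀ : f q = g q) :
    EqOn (fun x => if x ≤ q then f x else g x) g (Icc q v) := by
  intro x hx
  rcases hx.1.eq_or_lt with rfl | hlt
  · simp [h₀]
  · simp [not_le.mpr hlt]

theorem hasDerivWithinAt_ite_le (huq : u ≤ q) (hqv : q ≤ v) (hf : DifferentiableOn ℝ f (Icc u q))
    (hg : DifferentiableOn ℝ g (Icc q v)) (h₀ : f q = g q)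
    (h₁ : derivWithin f (Icc u q) q = derivWithin g (Icc q v) q) (x : ℝ) :
    HasDerivWithinAt (fun x => if x ≤ q then f x else g x)
      (if x ≤ q then derivWithin f (Icc u q) x else derivWithin g (Icc q v) x) (Icc u v) x := by
  rw [← Icc_union_Icc_eq_Icc huq hqv]
  refine .union ?_ ?_
  · by_cases hxl : x ∈ Icc u q
    · rw [if_pos hxl.2]
      exact (hf x hxl).hasDerivWithinAt.congr_of_mem eqOn_ite_le_Icc_left hxl
    · exact HasFDerivWithinAt.of_notMem_closure (by rwa [isClosed_Icc.closure_eq])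
  · by_cases hxr : x ∈ Icc q v
    · have hD : (if x ≤ q then derivWithin f (Icc u q) x else derivWithin g (Icc q v) x) =
          derivWithin g (Icc q v) x := by
        split_ifs with hxq
        · obtain rfl := le_antisymm hxq hxr.1
          exact h₁
        · rfl
      rw [hD]
      exact (hg x hxr).hasDerivWithinAt.congr_of_mem (eqOn_ite_le_Icc_right h₀) hxr
    · exact HasFDerivWithinAt.of_notMem_closure (by rwa [isClosed_Icc.closure_eq])

theorem ContDiffOn.ite_le {n : ℕ} (hf : ContDiffOn ℝ n f (Icc u q))
    (hg : ContDiffOn ℝ n g (Icc q v)) (huq : u < q) (hqv : q < v)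
    (hfg : ∀ j ≤ n, iteratedDerivWithin j f (Icc u q) q = iteratedDerivWithin j g (Icc q v) q) :
    ContDiffOn ℝ n (fun x => if x ≤ q then f x else g x) (Icc u v) := by
  have h₀ : f q = g q := by simpa using hfg 0 (Nat.zero_le n)
  induction n generalizing f g with
  | zero =>
    rw [Nat.cast_zero, contDiffOn_zero, ← Icc_union_Icc_eq_Icc huq.le hqv.le]
    exact ContinuousOn.union_of_isClosed
      (hf.continuousOn.congr eqOn_ite_le_Icc_left)
      (hg.continuousOn.congr (eqOn_ite_le_Icc_right h₀)) isClosed_Icc isClosed_Icc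
  | succ n ih =>
    have hUf := uniqueDiffOn_Icc huq
    have hUg := uniqueDiffOn_Icc hqv
    have h₁ : derivWithin f (Icc u q) q = derivWithin g (Icc q v) q := by
      simpa [iteratedDerivWithin_one] using hfg 1 (by omega)
    have hderiv := hasDerivWithinAt_ite_le huq.le hqv.le
      (hf.differentiableOn (by simp)) (hg.differentiableOn (by simp)) h₀ h₁
    have hD : ContDiffOn ℝ n (fun x => if x ≤ q then derivWithin f (Icc u q) x
        else derivWithin g (Icc q v) x) (Icc u v) := by
      refine ih (hf.derivWithin hUf (by push_cast; rfl)) (hg.derivWithin hUg (by push_cast; rfl))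
        (fun j hj => ?_) h₁
      simpa only [← iteratedDerivWithin_succ'] using hfg (j + 1) (by omega)
    rw [Nat.cast_succ, contDiffOn_succ_iff_derivWithin (uniqueDiffOn_Icc (huq.trans hqv))]
    refine ⟨fun x hx => (hderiv x).differentiableWithinAt, by simp, hD.congr fun x hx => ?_⟩
    exact (hderiv x).derivWithin (uniqueDiffOn_Icc (huq.trans hqv) x hx)

theorem StrictMonoOn.ite_le (hf : StrictMonoOn f (Icc u q)) (hg : StrictMonoOn g (Icc q v))
    (huq : u ≤ q) (hqv : q ≤ v) (h₀ : f q = g q) :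
    StrictMonoOn (fun x => if x ≤ q then f x else g x) (Icc u v) := by
  rw [← Icc_union_Icc_eq_Icc huq hqv]
  exact StrictMonoOn.union (hf.congr eqOn_ite_le_Icc_left.symm)
    (hg.congr (eqOn_ite_le_Icc_right h₀).symm) (isGreatest_Icc huq) (isLeast_Icc hqv)

end Glue

noncomputable def jetPoly (d : ℕ → ℝ) (n : ℕ) (p x : ℝ) : ℝ :=
  ∑ j ∈ Finset.range (n + 1), d j * (x - p) ^ j / j.factorial

section JetPoly

variable (d : ℕ → ℝ) (p : ℝ)

theorem contDiff_jetPoly (n : ℕ) {m : WithTop ℕ∞} : ContDiff ℝ m (jetPoly d n p) :=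
  ContDiff.sum fun j _ => (contDiff_const.mul ((contDiff_id.sub contDiff_const).pow j)).div_const _

theorem jetPoly_self (n : ℕ) : jetPoly d n p p = d 0 := by
  simp [jetPoly, Finset.sum_range_succ']

theorem hasDerivAt_jetPoly (n : ℕ) (x : ℝ) :
    HasDerivAt (jetPoly d (n + 1) p) (jetPoly (fun j => d (j + 1)) n p x) x := by
  have hterm (j : ℕ) : HasDerivAt (fun y => d j * (y - p) ^ j / j.factorial)
      (d j * (j * (x - p) ^ (j - 1)) / j.factorial) x := by
    simpa using ((((hasDerivAt_id x).sub_const p).fun_pow j).const_mul (d j)).div_const _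
  refine (HasDerivAt.fun_sum fun j _ => hterm j).congr_deriv ?_
  rw [Finset.sum_range_succ']
  simp only [jetPoly, CharP.cast_eq_zero, zero_mul, mul_zero, zero_div, add_zero]
  refine Finset.sum_congr rfl fun j _ => ?_
  rw [Nat.factorial_succ, Nat.add_sub_cancel]
  push_cast
  field_simp

theorem deriv_jetPoly (n : ℕ) : deriv (jetPoly d (n + 1) p) = jetPoly (fun j => d (j + 1)) n p :=
  funext fun x => (hasDerivAt_jetPoly d p n x).deriv

theorem iteratedDeriv_jetPoly_self {n j : ℕ} (hj : j ≤ n) :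
    iteratedDeriv j (jetPoly d n p) p = d j := by
  induction j generalizing d n with
  | zero => simpa using jetPoly_self d p n
  | succ j ih =>
    obtain ⟨n, rfl⟩ := Nat.exists_eq_add_of_le' (Nat.zero_lt_of_lt hj)
    rw [iteratedDeriv_succ', deriv_jetPoly]
    exact ih _ (by omega)

theorem iteratedDerivWithin_jetPoly_self {s : Set ℝ} (hs : UniqueDiffOn ℝ s) (hp : p ∈ s)
    {n j : ℕ} (hj : j ≤ n) : iteratedDerivWithin j (jetPoly d n p) s p = d j := by
  rw [iteratedDerivWithin_eq_iteratedDeriv hs (contDiff_jetPoly d p n).contDiffAt hp,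
    iteratedDeriv_jetPoly_self d p hj]

theorem exists_strictMonoOn_jetPoly {n : ℕ} (hn : 1 ≤ n) (hd : 0 < d 1) :
    ∃ ε > 0, StrictMonoOn (jetPoly d n p) (Icc (p - ε) (p + ε)) := by
  obtain ⟨n, rfl⟩ := Nat.exists_eq_add_of_le' hn
  have hcont : Continuous (deriv (jetPoly d (n + 1) p)) := by
    rw [deriv_jetPoly]
    exact (contDiff_jetPoly _ p n (m := 0)).continuous
  have hpos : 0 < deriv (jetPoly d (n + 1) p) p := by
    rwa [deriv_jetPoly, jetPoly_self]
  obtain ⟨ε, hε, hball⟩ := Metric.mem_nhds_iff.mp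
    (continuousAt_const.eventually_lt hcont.continuousAt hpos)
  refine ⟨ε / 2, half_pos hε, strictMonoOn_of_deriv_pos (convex_Icc _ _)
    (contDiff_jetPoly d p _ (m := 0)).continuous.continuousOn fun x hx => hball ?_⟩
  rw [interior_Icc] at hx
  rw [Real.ball_eq_Ioo]
  constructor <;> linarith [hx.1, hx.2]

end JetPoly

section Extension

variable {n : ℕ} {f : ℝ → ℝ} {a b : ℝ}

theorem exists_extension_right (hn : 1 ≤ n) (hab : a < b) (hf : ContDiffOn ℝ n f (Icc a b))
    (hfm : StrictMonoOn f (Icc a b)) (hf' : 0 < derivWithin f (Icc a b) b) :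
    ∃ c, b < c ∧ ∃ g : ℝ → ℝ, ContDiffOn ℝ n g (Icc a c) ∧ StrictMonoOn g (Icc a c) ∧
      EqOn g f (Icc a b) ∧ 0 < deriv g b := by
  set d := fun j => iteratedDerivWithin j f (Icc a b) b
  obtain ⟨ε, hε, hTm⟩ := exists_strictMonoOn_jetPoly d b hn (by simpa [d] using hf')
  have hbε : b < b + ε := by linarith
  have hgC : ContDiffOn ℝ n (fun x => if x ≤ b then f x else jetPoly d n b x) (Icc a (b + ε)) :=
    hf.ite_le (contDiff_jetPoly d b n).contDiffOn hab hbε fun j hj =>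
      (iteratedDerivWithin_jetPoly_self d b (uniqueDiffOn_Icc hbε) ⟨le_rfl, hbε.le⟩ hj).symm
  refine ⟨b + ε, hbε, _, hgC, hfm.ite_le (hTm.mono (Icc_subset_Icc (by linarith) le_rfl))
    hab.le hbε.le (jetPoly_self d b n).symm, eqOn_ite_le_Icc_left, ?_⟩
  have hgb := (hgC.contDiffAt (Icc_mem_nhds hab hbε)).differentiableAt (by simp; omega)
  rwa [← hgb.derivWithin (uniqueDiffOn_Icc hab b ⟨hab.le, le_rfl⟩),
    derivWithin_congr eqOn_ite_le_Icc_left (if_pos le_rfl)]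

theorem exists_extension_left (hn : 1 ≤ n) (hab : a < b) (hf : ContDiffOn ℝ n f (Icc a b))
    (hfm : StrictMonoOn f (Icc a b)) (hf' : 0 < derivWithin f (Icc a b) a) :
    ∃ c, c < a ∧ ∃ g : ℝ → ℝ, ContDiffOn ℝ n g (Icc c b) ∧ StrictMonoOn g (Icc c b) ∧
      EqOn g f (Icc a b) ∧ 0 < deriv g a := by
  set d := fun j => iteratedDerivWithin j f (Icc a b) a
  obtain ⟨ε, hε, hTm⟩ := exists_strictMonoOn_jetPoly d a hn (by simpa [d] using hf')
  have haε : a - ε < a := by linarith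
  have hTa : jetPoly d n a a = f a := by simp [jetPoly_self, d]
  have hgC : ContDiffOn ℝ n (fun x => if x ≤ a then jetPoly d n a x else f x) (Icc (a - ε) b) :=
    (contDiff_jetPoly d a n).contDiffOn.ite_le hf haε hab fun j hj =>
      iteratedDerivWithin_jetPoly_self d a (uniqueDiffOn_Icc haε) ⟨haε.le, le_rfl⟩ hj
  refine ⟨a - ε, haε, _, hgC, (hTm.mono (Icc_subset_Icc le_rfl (by linarith))).ite_le hfm
    haε.le hab.le hTa, eqOn_ite_le_Icc_right hTa, ?_⟩
  have hga := (hgC.contDiffAt (Icc_mem_nhds haε hab)).differentiableAt (by simp; omega)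
  rwa [← hga.derivWithin (uniqueDiffOn_Icc hab a ⟨le_rfl, hab.le⟩),
    derivWithin_congr (eqOn_ite_le_Icc_right hTa) (eqOn_ite_le_Icc_right hTa ⟨le_rfl, hab.le⟩)]

end Extension

theorem exists_forall_Ioo_of_eventually {p : ℝ → Prop} (h : ∀ᶠ x in 𝓝 0, p x) :
    ∃ δ > 0, ∀ x ∈ Ioo (-δ) δ, p x := by
  obtain ⟨δ, hδ, h⟩ := Metric.eventually_nhds_iff_ball.1 h
  exact ⟨δ, hδ, fun x hx => h x (by rwa [Real.ball_eq_Ioo, zero_sub, zero_add])⟩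

theorem exists_localInverse {n : ℕ} (hn : 1 ≤ n) {f : ℝ → ℝ} {p : ℝ} (hf : ContDiffAt ℝ n f p)
    (hf' : deriv f p ≠ 0) :
    ∃ g : ℝ → ℝ, ContDiffAt ℝ n g (f p) ∧ g (f p) = p ∧ (∀ᶠ x in 𝓝 p, g (f x) = x) ∧
      ∀ᶠ y in 𝓝 (f p), f (g y) = y := by
  have hn0 : (n : WithTop ℕ∞) ≠ 0 := by simp; omega
  have hfd := ((differentiableAt_of_deriv_ne_zero hf').hasDerivAt).hasFDerivAt_equiv hf'
  have hstrict := hf.hasStrictFDerivAt' hfd hn0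
  exact ⟨hf.localInverse hfd hn0, hf.to_localInverse hfd hn0, hf.localInverse_apply_image hfd hn0,
    hstrict.eventually_left_inverse, hstrict.eventually_right_inverse⟩

section CompExtension

variable {n : ℕ} {ξ η F : ℝ → ℝ} {u v ε : ℝ} {s : Set ℝ}

theorem exists_extension_right_of_comp_eq (hn : 1 ≤ n) (hu : u < 0) (hε : 0 < ε)
    (hξC : ContDiffOn ℝ n ξ (Icc u 0)) (hξm : StrictMonoOn ξ (Icc u 0))
    (hηC : ContDiffAt ℝ n η (ξ 0)) (hη' : deriv η (ξ 0) ≠ 0) (hηm : StrictMonoOn η s)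
    (hs : s ∈ 𝓝 (ξ 0)) (hFC : ContDiffOn ℝ n F (Ioo (-ε) ε)) (hFm : StrictMonoOn F (Ioo (-ε) ε))
    (hF : ∀ x ∈ Ioc (-ε) 0, F x = η (ξ x)) :
    ∃ δ > 0, ∃ ξh : ℝ → ℝ, ContDiffOn ℝ n ξh (Ioo u δ) ∧ StrictMonoOn ξh (Ioo u δ) ∧
      EqOn ξh ξ (Iic 0) ∧ ∀ x ∈ Ioo (-δ) δ, ξh x ∈ s ∧ η (ξh x) = F x := by
  obtain ⟨g, hgC, hgξ, hleft, hright⟩ := exists_localInverse hn hηC hη'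
  have hFt : Tendsto F (𝓝 0) (𝓝 (η (ξ 0))) := by
    rw [← hF 0 ⟨neg_lt_zero.2 hε, le_rfl⟩]
    exact (hFC.continuousOn.continuousAt (Ioo_mem_nhds (neg_lt_zero.2 hε) hε)).tendsto
  have hξt : Tendsto ξ (𝓝[≤] 0) (𝓝 (ξ 0)) :=
    ((continuousWithinAt_Icc_iff_Iic hu).1 (hξC.continuousOn 0 ⟨hu.le, le_rfl⟩)).tendsto
  obtain ⟨δ, hδ, hP⟩ := exists_forall_Ioo_of_eventually (p := fun x => x ∈ Ioo (-ε) ε ∧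
      ContDiffAt ℝ n g (F x) ∧ g (F x) ∈ s ∧ η (g (F x)) = F x ∧ (x ≤ 0 → g (F x) = ξ x)) <| by
    filter_upwards [Ioo_mem_nhds (neg_lt_zero.2 hε) hε, hFt.eventually (hgC.eventually (by simp)),
      hFt.eventually (hgC.continuousAt.preimage_mem_nhds (hgξ ▸ hs)), hFt.eventually hright,
      eventually_nhdsWithin_iff.1 (hξt.eventually hleft)] with x hx hgx hxs hηg hgη
    exact ⟨hx, hgx, hxs, hηg, fun h => by rw [hF x ⟨hx.1, h⟩]; exact hgη h⟩
  set ξh := fun x => if x ≤ 0 then ξ x else g (F x)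
  have hξh : ∀ x ∈ Ioo (-δ) δ, ξh x = g (F x) := fun x hx => by
    obtain ⟨-, -, -, -, hgF⟩ := hP x hx
    by_cases h : x ≤ 0
    · simp only [ξh, if_pos h, hgF h]
    · simp only [ξh, if_neg h]
  have hmem : ∀ x ∈ Ioo (-δ) δ, ξh x ∈ s := fun x hx => hξh x hx ▸ (hP x hx).2.2.1
  have hcomp : ∀ x ∈ Ioo (-δ) δ, η (ξh x) = F x := fun x hx => hξh x hx ▸ (hP x hx).2.2.2.1
  have hC : ContDiffOn ℝ n ξh (Ioo (-δ) δ) := fun x hx =>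
    (((hP x hx).2.1.comp x (hFC.contDiffAt (Ioo_mem_nhds (hP x hx).1.1 (hP x hx).1.2))
      ).contDiffWithinAt).congr hξh (hξh x hx)
  have hM : StrictMonoOn ξh (Ioo (-δ) δ) := fun x hx y hy hxy => by
    rw [← hηm.lt_iff_lt (hmem x hx) (hmem y hy), hcomp x hx, hcomp y hy]
    exact hFm (hP x hx).1 (hP y hy).1 hxy
  refine ⟨δ, hδ, ξh, ?_, ?_, fun x hx => if_pos hx, fun x hx => ⟨hmem x hx, hcomp x hx⟩⟩
  · refine (ContDiffOn.union_of_isOpen ((hξC.mono Ioo_subset_Icc_self).congr fun x hx =>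
      if_pos hx.2.le) hC isOpen_Ioo isOpen_Ioo).mono fun x hx => ?_
    by_cases h : x < 0
    exacts [.inl ⟨hx.1, h⟩, .inr ⟨by linarith, hx.2⟩]
  · refine (StrictMonoOn.union
      ((hξm.mono Ioc_subset_Icc_self).congr fun x hx => (if_pos hx.2).symm)
      (hM.mono fun x hx => ⟨by linarith [hx.1], hx.2⟩) (isGreatest_Ioc hu) (isLeast_Ico hδ)).mono
      fun x hx => ?_
    by_cases h : x ≤ 0
    exacts [.inl ⟨hx.1, h⟩, .inr ⟨le_of_not_ge h, hx.2⟩]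

theorem exists_extension_left_of_comp_eq (hn : 1 ≤ n) (hv : 0 < v) (hε : 0 < ε)
    (hηC : ContDiffOn ℝ n η (Icc 0 v)) (hηm : StrictMonoOn η (Icc 0 v))
    (hξC : ContDiffAt ℝ n ξ (η 0)) (hξ' : deriv ξ (η 0) ≠ 0) (hξm : StrictMonoOn ξ s)
    (hs : s ∈ 𝓝 (η 0)) (hFC : ContDiffOn ℝ n F (Ioo (-ε) ε)) (hFm : StrictMonoOn F (Ioo (-ε) ε))
    (hF : ∀ x ∈ Ico 0 ε, F x = ξ (η x)) :
    ∃ δ > 0, ∃ ηh : ℝ → ℝ, ContDiffOn ℝ n ηh (Ioo (-δ) v) ∧ StrictMonoOn ηh (Ioo (-δ) v) ∧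
      EqOn ηh η (Ici 0) ∧ ∀ x ∈ Ioo (-δ) δ, ηh x ∈ s ∧ ξ (ηh x) = F x := by
  obtain ⟨g, hgC, hgη, hleft, hright⟩ := exists_localInverse hn hξC hξ'
  have hFt : Tendsto F (𝓝 0) (𝓝 (ξ (η 0))) := by
    rw [← hF 0 ⟨le_rfl, hε⟩]
    exact (hFC.continuousOn.continuousAt (Ioo_mem_nhds (neg_lt_zero.2 hε) hε)).tendsto
  have hηt : Tendsto η (𝓝[≥] 0) (𝓝 (η 0)) :=
    ((continuousWithinAt_Icc_iff_Ici hv).1 (hηC.continuousOn 0 ⟨le_rfl, hv.le⟩)).tendsto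
  obtain ⟨δ, hδ, hP⟩ := exists_forall_Ioo_of_eventually (p := fun x => x ∈ Ioo (-ε) ε ∧
      ContDiffAt ℝ n g (F x) ∧ g (F x) ∈ s ∧ ξ (g (F x)) = F x ∧ (0 ≤ x → g (F x) = η x)) <| by
    filter_upwards [Ioo_mem_nhds (neg_lt_zero.2 hε) hε, hFt.eventually (hgC.eventually (by simp)),
      hFt.eventually (hgC.continuousAt.preimage_mem_nhds (hgη ▸ hs)), hFt.eventually hright,
      eventually_nhdsWithin_iff.1 (hηt.eventually hleft)] with x hx hgx hxs hξg hgξ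
    exact ⟨hx, hgx, hxs, hξg, fun h => by rw [hF x ⟨h, hx.2⟩]; exact hgξ h⟩
  set ηh := fun x => if 0 ≤ x then η x else g (F x)
  have hηh : ∀ x ∈ Ioo (-δ) δ, ηh x = g (F x) := fun x hx => by
    obtain ⟨-, -, -, -, hgF⟩ := hP x hx
    by_cases h : 0 ≤ x
    · simp only [ηh, if_pos h, hgF h]
    · simp only [ηh, if_neg h]
  have hmem : ∀ x ∈ Ioo (-δ) δ, ηh x ∈ s := fun x hx => hηh x hx ▸ (hP x hx).2.2.1
  have hcomp : ∀ x ∈ Ioo (-δ) δ, ξ (ηh x) = F x := fun x hx => hηh x hx ▸ (hP x hx).2.2.2.1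
  have hC : ContDiffOn ℝ n ηh (Ioo (-δ) δ) := fun x hx =>
    (((hP x hx).2.1.comp x (hFC.contDiffAt (Ioo_mem_nhds (hP x hx).1.1 (hP x hx).1.2))
      ).contDiffWithinAt).congr hηh (hηh x hx)
  have hM : StrictMonoOn ηh (Ioo (-δ) δ) := fun x hx y hy hxy => by
    rw [← hξm.lt_iff_lt (hmem x hx) (hmem y hy), hcomp x hx, hcomp y hy]
    exact hFm (hP x hx).1 (hP y hy).1 hxy
  refine ⟨δ, hδ, ηh, ?_, ?_, fun x hx => if_pos hx, fun x hx => ⟨hmem x hx, hcomp x hx⟩⟩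
  · refine (ContDiffOn.union_of_isOpen hC ((hηC.mono Ioo_subset_Icc_self).congr fun x hx =>
      if_pos hx.1.le) isOpen_Ioo isOpen_Ioo).mono fun x hx => ?_
    by_cases h : 0 < x
    exacts [.inr ⟨h, hx.2⟩, .inl ⟨hx.1, by linarith⟩]
  · refine (StrictMonoOn.union (hM.mono fun x hx => ⟨hx.1, by linarith [hx.2]⟩)
      ((hηm.mono Ico_subset_Icc_self).congr fun x hx => (if_pos hx.1).symm)
      (isGreatest_Ioc (neg_lt_zero.2 hδ)) (isLeast_Ico hv)).mono fun x hx => ?_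
    by_cases h : 0 ≤ x
    exacts [.inr ⟨h, hx.2⟩, .inl ⟨hx.1, le_of_not_ge h⟩]

end CompExtension

section GluedComp

variable {n : ℕ} {ξ η : ℝ → ℝ}

theorem exists_pos_mapsTo_Icc (hη0 : η 0 < 0) (hξ0 : 0 < ξ 0)
    (hξc : ContinuousOn ξ (Icc (η 0) 0)) (hηc : ContinuousOn η (Icc 0 (ξ 0)))
    (hξm : MonotoneOn ξ (Icc (η 0) 0)) (hηm : MonotoneOn η (Icc 0 (ξ 0))) :
    ∃ ε > 0, Icc (-ε) 0 ⊆ Icc (η 0) 0 ∧ Icc 0 ε ⊆ Icc 0 (ξ 0) ∧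
      MapsTo ξ (Icc (-ε) 0) (Icc 0 (ξ 0)) ∧ MapsTo η (Icc 0 ε) (Icc (η 0) 0) := by
  have hleft : ∀ᶠ x in 𝓝[≤] 0, η 0 < x ∧ 0 < ξ x :=
    (eventually_nhdsWithin_of_eventually_nhds (lt_mem_nhds hη0)).and
      (((continuousWithinAt_Icc_iff_Iic hη0).1 (hξc 0 ⟨hη0.le, le_rfl⟩)).eventually
        (lt_mem_nhds hξ0))
  have hright : ∀ᶠ x in 𝓝[≥] 0, x < ξ 0 ∧ η x < 0 :=
    (eventually_nhdsWithin_of_eventually_nhds (gt_mem_nhds hξ0)).and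
      (((continuousWithinAt_Icc_iff_Ici hξ0).1 (hηc 0 ⟨le_rfl, hξ0.le⟩)).eventually
        (gt_mem_nhds hη0))
  obtain ⟨l, hl, hlS⟩ := mem_nhdsLE_iff_exists_Icc_subset.1 hleft
  obtain ⟨r, hr, hrS⟩ := mem_nhdsGE_iff_exists_Icc_subset.1 hright
  have hL : ∀ x ∈ Icc (-min (-l) r) 0, η 0 < x ∧ 0 < ξ x := fun x hx =>
    hlS ⟨by linarith [hx.1, min_le_left (-l) r], hx.2⟩
  have hR : ∀ x ∈ Icc 0 (min (-l) r), x < ξ 0 ∧ η x < 0 := fun x hx =>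
    hrS ⟨hx.1, by linarith [hx.2, min_le_right (-l) r]⟩
  refine ⟨min (-l) r, lt_min (neg_pos.2 hl) hr, fun x hx => ⟨(hL x hx).1.le, hx.2⟩,
    fun x hx => ⟨hx.1, (hR x hx).1.le⟩, fun x hx => ⟨(hL x hx).2.le, ?_⟩,
    fun x hx => ⟨?_, (hR x hx).2.le⟩⟩
  · exact hξm ⟨(hL x hx).1.le, hx.2⟩ ⟨hη0.le, le_rfl⟩ hx.2
  · exact hηm ⟨le_rfl, hξ0.le⟩ ⟨hx.1, (hR x hx).1.le⟩ hx.1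

theorem Icc_eventuallyEq_Iic {ε : ℝ} (hε : 0 < ε) : Icc (-ε) 0 =ᶠ[𝓝 0] Iic 0 := by
  filter_upwards [Ioi_mem_nhds (neg_lt_zero.2 hε)] with x hx
  exact propext ⟨fun h => h.2, fun h => ⟨le_of_lt hx, h⟩⟩

theorem Icc_eventuallyEq_Ici {ε : ℝ} (hε : 0 < ε) : Icc 0 ε =ᶠ[𝓝 0] Ici 0 := by
  filter_upwards [Iio_mem_nhds hε] with x hx
  exact propext ⟨fun h => h.1, fun h => ⟨h, le_of_lt hx⟩⟩

theorem exists_glued_comp (hη0 : η 0 < 0) (hξ0 : 0 < ξ 0)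
    (hξC : ContDiffOn ℝ n ξ (Icc (η 0) 0)) (hηC : ContDiffOn ℝ n η (Icc 0 (ξ 0)))
    (hξm : StrictMonoOn ξ (Icc (η 0) 0)) (hηm : StrictMonoOn η (Icc 0 (ξ 0)))
    (hcomm : η (ξ 0) = ξ (η 0))
    (hjet : ∀ j : ℕ, 1 ≤ j → j ≤ n →
      iteratedDerivWithin j (η ∘ ξ) (Iic 0) 0 = iteratedDerivWithin j (ξ ∘ η) (Ici 0) 0) :
    ∃ ε > 0, ∃ F : ℝ → ℝ, ContDiffOn ℝ n F (Icc (-ε) ε) ∧ StrictMonoOn F (Icc (-ε) ε) ∧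
      (∀ x ∈ Icc (-ε) 0, x ∈ Icc (η 0) 0 ∧ ξ x ∈ Icc 0 (ξ 0) ∧ F x = η (ξ x)) ∧
      (∀ x ∈ Icc 0 ε, x ∈ Icc 0 (ξ 0) ∧ η x ∈ Icc (η 0) 0 ∧ F x = ξ (η x)) := by
  obtain ⟨ε, hε, hsubL, hsubR, hmapL, hmapR⟩ := exists_pos_mapsTo_Icc hη0 hξ0 hξC.continuousOn
    hηC.continuousOn hξm.monotoneOn hηm.monotoneOn
  have hεn : -ε < 0 := neg_lt_zero.2 hε
  refine ⟨ε, hε, fun x => if x ≤ 0 then η (ξ x) else ξ (η x), ?_, ?_,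
    fun x hx => ⟨hsubL hx, hmapL hx, if_pos hx.2⟩,
    fun x hx => ⟨hsubR hx, hmapR hx,
      eqOn_ite_le_Icc_right (f := fun x => η (ξ x)) (g := fun x => ξ (η x)) hcomm hx⟩⟩
  · refine (hηC.comp (hξC.mono hsubL) hmapL).ite_le (hξC.comp (hηC.mono hsubR) hmapR) hεn hε
      fun j hj => ?_
    rcases Nat.eq_zero_or_pos j with rfl | hj1
    · simpa using hcomm
    · simp only [iteratedDerivWithin, iteratedFDerivWithin_congr_set (Icc_eventuallyEq_Iic hε),
        iteratedFDerivWithin_congr_set (Icc_eventuallyEq_Ici hε)]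
      exact hjet j hj1 hj
  · exact (hηm.comp (hξm.mono hsubL) hmapL).ite_le (hξm.comp (hηm.mono hsubR) hmapR) hεn.le
      hε.le hcomm

end GluedComp

theorem exists_commuting_extensions_of_glued {n : ℕ} {ξ η F : ℝ → ℝ} {a b u v ε : ℝ} (hn : 1 ≤ n)
    (ha : η 0 = a) (hb : ξ 0 = b) (hua : u < a) (ha0 : a < 0) (hb0 : 0 < b) (hbv : b < v)
    (hε : 0 < ε) (hξC : ContDiffOn ℝ n ξ (Icc u 0)) (hηC : ContDiffOn ℝ n η (Icc 0 v))
    (hξm : StrictMonoOn ξ (Icc u 0)) (hηm : StrictMonoOn η (Icc 0 v))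
    (hξ' : deriv ξ a ≠ 0) (hη' : deriv η b ≠ 0)
    (hFC : ContDiffOn ℝ n F (Ioo (-ε) ε)) (hFm : StrictMonoOn F (Ioo (-ε) ε))
    (hFl : ∀ x ∈ Ioc (-ε) 0, F x = η (ξ x)) (hFr : ∀ x ∈ Ico 0 ε, F x = ξ (η x)) :
    ∃ δ > 0, ∃ ξh ηh : ℝ → ℝ, u < -δ ∧ δ < v ∧
      ContDiffOn ℝ n ξh (Ioo u δ) ∧ ContDiffOn ℝ n ηh (Ioo (-δ) v) ∧
      StrictMonoOn ξh (Ioo u δ) ∧ StrictMonoOn ηh (Ioo (-δ) v) ∧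
      EqOn ξh ξ (Iic 0) ∧ EqOn ηh η (Ici 0) ∧
      (∀ x ∈ Ioo (-δ) δ, ηh (ξh x) = ξh (ηh x)) ∧
      {x | x ∈ Ioo u δ ∩ Ioo (-δ) v ∧ ηh x ∈ Ioo u δ ∧ ξh x ∈ Ioo (-δ) v} = Ioo (-δ) δ := by
  subst ha hb
  obtain ⟨δ₁, hδ₁, ξh, hξhC, hξhm, hξh, hξhF⟩ := exists_extension_right_of_comp_eq hn
    (hua.trans ha0) hε hξC hξm (hηC.contDiffAt (Icc_mem_nhds hb0 hbv)) hη'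
    (hηm.mono Ioo_subset_Icc_self) (Ioo_mem_nhds hb0 hbv) hFC hFm hFl
  obtain ⟨δ₂, hδ₂, ηh, hηhC, hηhm, hηh, hηhF⟩ := exists_extension_left_of_comp_eq hn
    (hb0.trans hbv) hε hηC hηm (hξC.contDiffAt (Icc_mem_nhds hua ha0)) hξ'
    (hξm.mono Ioo_subset_Icc_self) (Ioo_mem_nhds hua ha0) hFC hFm hFr
  set δ := min (min δ₁ δ₂) (min (-u / 2) (v / 2))
  have hδ : 0 < δ := lt_min (lt_min hδ₁ hδ₂) (lt_min (by linarith) (by linarith))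
  have hδ₁' : δ ≤ δ₁ := (min_le_left _ _).trans (min_le_left _ _)
  have hδ₂' : δ ≤ δ₂ := (min_le_left _ _).trans (min_le_right _ _)
  have hδu : δ ≤ -u / 2 := (min_le_right _ _).trans (min_le_left _ _)
  have hδv : δ ≤ v / 2 := (min_le_right _ _).trans (min_le_right _ _)
  have hx₁ : ∀ x ∈ Ioo (-δ) δ, x ∈ Ioo (-δ₁) δ₁ := fun x hx =>
    ⟨by linarith [hx.1], by linarith [hx.2]⟩
  have hx₂ : ∀ x ∈ Ioo (-δ) δ, x ∈ Ioo (-δ₂) δ₂ := fun x hx =>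
    ⟨by linarith [hx.1], by linarith [hx.2]⟩
  -- `ξh x` lies to the right of `0`, where `ηh = η`, and `ηh x` to the left, where `ξh = ξ`.
  have hcomm : ∀ x ∈ Ioo (-δ) δ, ηh (ξh x) = F x ∧ ξh (ηh x) = F x := fun x hx =>
    ⟨(hηh (hξhF x (hx₁ x hx)).1.1.le).trans (hξhF x (hx₁ x hx)).2,
      (hξh (hηhF x (hx₂ x hx)).1.2.le).trans (hηhF x (hx₂ x hx)).2⟩
  refine ⟨δ, hδ, ξh, ηh, by linarith, by linarith, hξhC.mono (Ioo_subset_Ioo_right (by linarith)),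
    hηhC.mono (Ioo_subset_Ioo_left (by linarith)), hξhm.mono (Ioo_subset_Ioo_right (by linarith)),
    hηhm.mono (Ioo_subset_Ioo_left (by linarith)), hξh, hηh,
    fun x hx => (hcomm x hx).1.trans (hcomm x hx).2.symm, ?_⟩
  ext x
  refine ⟨fun hx => ⟨hx.1.2.1, hx.1.1.2⟩, fun hx => ⟨⟨⟨by linarith [hx.1], hx.2⟩,
    ⟨hx.1, by linarith [hx.2]⟩⟩, ?_, ?_⟩⟩
  · obtain ⟨h1, h2⟩ := (hηhF x (hx₂ x hx)).1
    exact ⟨h1, by linarith⟩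
  · obtain ⟨h1, h2⟩ := (hξhF x (hx₁ x hx)).1
    exact ⟨by linarith, h2⟩

/-- Extension of a commuting pair to commuting `C^r` homeomorphic extensions on
open intervals. -/
theorem commuting_extensions (r d : ℕ) (hr : 1 ≤ r) (z : CritPair)
    (hz : IsCritPair r d z) :
    ∃ (Vm Vp : Set ℝ) (xih etah : ℝ → ℝ),
      (∃ u v : ℝ, u < v ∧ Vm = Set.Ioo u v) ∧
      (∃ u v : ℝ, u < v ∧ Vp = Set.Ioo u v) ∧
      Set.Icc (z.eta 0) 0 ⊆ Vm ∧ Set.Icc 0 (z.xi 0) ⊆ Vp ∧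
      ContDiffOn ℝ r xih Vm ∧ ContDiffOn ℝ r etah Vp ∧
      StrictMonoOn xih Vm ∧ StrictMonoOn etah Vp ∧
      Set.EqOn xih z.xi (Set.Icc (z.eta 0) 0) ∧
      Set.EqOn etah z.eta (Set.Icc 0 (z.xi 0)) ∧
      (∀ x ∈ {x | x ∈ Vm ∩ Vp ∧ etah x ∈ Vm ∧ xih x ∈ Vp}, etah (xih x) = xih (etah x)) ∧
      (∃ u v : ℝ, u < 0 ∧ 0 < v ∧
        {x | x ∈ Vm ∩ Vp ∧ etah x ∈ Vm ∧ xih x ∈ Vp} = Set.Ioo u v) := by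
  obtain ⟨-, ha, hb, hηC, hξC, hηm, hξm, hη', hξ', hcomm, -, -, hjet⟩ := hz
  have haI : z.eta 0 ∈ Icc (z.eta 0) 0 := ⟨le_rfl, ha.le⟩
  have hbI : z.xi 0 ∈ Icc 0 (z.xi 0) := ⟨hb.le, le_rfl⟩
  have hξa := hξ' _ haI ha.ne
  have hηb := hη' _ hbI hb.ne'
  rw [← (differentiableAt_of_deriv_ne_zero hξa.ne').derivWithin (uniqueDiffOn_Icc ha _ haI)] at hξa
  rw [← (differentiableAt_of_deriv_ne_zero hηb.ne').derivWithin (uniqueDiffOn_Icc hb _ hbI)] at hηb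
  obtain ⟨u, hu, ξ₀, hξ₀C, hξ₀m, hξ₀, hξ₀'⟩ := exists_extension_left hr ha hξC hξm hξa
  obtain ⟨v, hv, η₀, hη₀C, hη₀m, hη₀, hη₀'⟩ := exists_extension_right hr hb hηC hηm hηb
  obtain ⟨ε, hε, F, hFC, hFm, hFl, hFr⟩ := exists_glued_comp ha hb hξC hηC hξm hηm hcomm hjet
  obtain ⟨δ, hδ, ξh, ηh, huδ, hδv, hξhC, hηhC, hξhm, hηhm, hξh, hηh, hcommh, hdom⟩ :=
    exists_commuting_extensions_of_glued hr (hη₀ ⟨le_rfl, hb.le⟩) (hξ₀ ⟨ha.le, le_rfl⟩) hu ha hb hv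
      hε hξ₀C hη₀C hξ₀m hη₀m hξ₀'.ne' hη₀'.ne' (hFC.mono Ioo_subset_Icc_self)
      (hFm.mono Ioo_subset_Icc_self)
      (fun x hx => by
        obtain ⟨hx, hξx, hF⟩ := hFl x (Ioc_subset_Icc_self hx)
        rw [hF, hξ₀ hx, hη₀ hξx])
      (fun x hx => by
        obtain ⟨hx, hηx, hF⟩ := hFr x (Ico_subset_Icc_self hx)
        rw [hF, hη₀ hx, hξ₀ hηx])
  refine ⟨Ioo u δ, Ioo (-δ) v, ξh, ηh, ⟨u, δ, by linarith, rfl⟩, ⟨-δ, v, by linarith, rfl⟩,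
    fun x hx => ⟨by linarith [hx.1], by linarith [hx.2]⟩,
    fun x hx => ⟨by linarith [hx.1], by linarith [hx.2]⟩, hξhC, hηhC, hξhm, hηhm,
    fun x hx => (hξh hx.2).trans (hξ₀ hx), fun x hx => (hηh hx.1).trans (hη₀ hx),
    fun x hx => hcommh x (hdom ▸ hx), -δ, δ, by linarith, hδ, hdom⟩
end

section
/- Let I = [a, b] be a compact interval with a < b. For every M > 0 there exists K = K(M, I) > 0 with the following property: for any continuous functions phi, psi : I -> R with sup norms at most M, the maps f = N^{-1}(phi) and g = N^{-1}(psi) satisfy max over k in {0,1,2} of sup over I of |D^k f - D^k g| <= K * sup over I of |phi - psi|. Here N^{-1}(phi)(x) = a + (b - a) * ( integral from a to x of exp( integral from a to s of phi(t) dt ) ds ) / ( integral from a to b of exp( integral from a to s of phi(t) dt ) ds ), which is the orientation-preserving C^2 diffeomorphism of I onto itself whose nonlinearity f''/f' equals phi. -/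
open Set MeasureTheory intervalIntegral

/-- The inverse of the nonlinearity operator on `[a, b]`: the orientation-preserving
`C^2` diffeomorphism of `[a,b]` whose nonlinearity `f''/f'` is `phi`. -/
noncomputable def ninv (a b : ℝ) (phi : ℝ → ℝ) : ℝ → ℝ := fun x =>
  a + (b - a) * (∫ s in a..x, Real.exp (∫ t in a..s, phi t)) /
      (∫ s in a..b, Real.exp (∫ t in a..s, phi t))

open Real

/-!
With `E φ x = exp (∫ t in a..x, φ t)` (`ninvDensity`) and `F φ x = ∫ s in a..x, E φ s`
(`ninvPrimitive`), `ninv a b φ = a + (b - a) * F φ / F φ b`, whose first two derivatives are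
`(b - a) * E φ / F φ b` and `(b - a) * (E φ * φ) / F φ b`. For `|φ| ≤ M` the exponent stays in
`[-M (b - a), M (b - a)]`, where `exp` is Lipschitz; hence the numerators `F φ x`, `E φ x`,
`E φ x * φ x` are bounded and Lipschitz in `φ` for the sup distance, while the common
denominator is at least `(b - a) * exp (-M (b - a))`. A quotient of such numerators by such
denominators is Lipschitz.
-/

lemma hasDerivWithinAt_integral_Icc {f : ℝ → ℝ} {a b x : ℝ} (hf : ContinuousOn f (Icc a b))
    (hx : x ∈ Icc a b) :
    HasDerivWithinAt (fun u => ∫ t in a..u, f t) (f x) (Icc a b) x :=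
  have : Fact (x ∈ Icc a b) := ⟨hx⟩
  integral_hasDerivWithinAt_right
    ((hf.mono (Icc_subset_Icc_right hx.2)).intervalIntegrable_of_Icc hx.1)
    (hf.stronglyMeasurableAtFilter_nhdsWithin measurableSet_Icc x) (hf x hx)

lemma abs_integral_le_of_forall_abs_le {f : ℝ → ℝ} {a b x C : ℝ}
    (hf : ∀ t ∈ Icc a b, |f t| ≤ C) (hx : x ∈ Icc a b) :
    |∫ t in a..x, f t| ≤ C * (b - a) := by
  have hC : 0 ≤ C := (abs_nonneg _).trans (hf x hx)
  have hsub : uIoc a x ⊆ Icc a b := by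
    rw [uIoc_of_le hx.1]
    exact Ioc_subset_Icc_self.trans (Icc_subset_Icc_right hx.2)
  calc |∫ t in a..x, f t| ≤ C * |x - a| :=
        intervalIntegral.norm_integral_le_of_norm_le_const (f := f) fun t ht => hf t (hsub ht)
    _ ≤ C * (b - a) := by
        rw [abs_of_nonneg (sub_nonneg.2 hx.1)]
        gcongr
        exact hx.2

lemma abs_exp_sub_exp_le {u v B : ℝ} (hu : u ≤ B) (hv : v ≤ B) :
    |exp u - exp v| ≤ exp B * |u - v| := by
  wlog h : v ≤ u generalizing u v
  · rw [abs_sub_comm, abs_sub_comm u v]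
    exact this hv hu (le_of_not_ge h)
  rw [abs_of_nonneg (sub_nonneg.2 (exp_le_exp.2 h)), abs_of_nonneg (sub_nonneg.2 h)]
  -- `exp u - exp v = exp u * (1 - exp (v - u))` and `1 - exp (v - u) ≤ u - v`
  have hvu : exp v = exp u * exp (v - u) := by rw [← exp_add, add_sub_cancel]
  nlinarith [add_one_le_exp (v - u), exp_pos u, exp_le_exp.2 hu]

lemma abs_div_sub_div_le {n₁ n₂ d₁ d₂ m : ℝ} (hm : 0 < m) (hd₁ : m ≤ d₁) (hd₂ : m ≤ d₂) :
    |n₁ / d₁ - n₂ / d₂| ≤ |n₁ - n₂| / m + |n₂| * |d₁ - d₂| / m ^ 2 := by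
  have hd₁' : 0 < d₁ := hm.trans_le hd₁
  have hd₂' : 0 < d₂ := hm.trans_le hd₂
  have hsplit : n₁ / d₁ - n₂ / d₂ = (n₁ - n₂) / d₁ + n₂ * (d₂ - d₁) / (d₁ * d₂) := by
    field_simp
    ring
  rw [hsplit, abs_sub_comm d₁ d₂]
  refine (abs_add_le _ _).trans (add_le_add ?_ ?_)
  · rw [abs_div, abs_of_pos hd₁']
    gcongr
  · rw [abs_div, abs_mul, abs_of_pos (mul_pos hd₁' hd₂'), sq]
    gcongr

lemma abs_mul_sub_mul_le {p₁ p₂ q₁ q₂ P Q : ℝ} (hp₂ : |p₂| ≤ P) (hq₁ : |q₁| ≤ Q) :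
    |p₁ * q₁ - p₂ * q₂| ≤ |p₁ - p₂| * Q + P * |q₁ - q₂| := by
  have hsplit : p₁ * q₁ - p₂ * q₂ = (p₁ - p₂) * q₁ + p₂ * (q₁ - q₂) := by ring
  rw [hsplit]
  refine (abs_add_le _ _).trans (add_le_add ?_ ?_) <;> rw [abs_mul]
  · exact mul_le_mul_of_nonneg_left hq₁ (abs_nonneg _)
  · exact mul_le_mul_of_nonneg_right hp₂ (abs_nonneg _)

noncomputable def ninvDensity (a : ℝ) (phi : ℝ → ℝ) (x : ℝ) : ℝ := exp (∫ t in a..x, phi t)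

noncomputable def ninvPrimitive (a : ℝ) (phi : ℝ → ℝ) (x : ℝ) : ℝ :=
  ∫ s in a..x, ninvDensity a phi s

section ninv

variable {a b M δ x : ℝ} {phi psi : ℝ → ℝ}

lemma ninv_eq :
    ninv a b phi = fun x => a + (b - a) * ninvPrimitive a phi x / ninvPrimitive a phi b :=
  rfl

lemma ninvDensity_pos : 0 < ninvDensity a phi x := exp_pos _

lemma continuousOn_ninvDensity (hphi : ContinuousOn phi (Icc a b)) :
    ContinuousOn (ninvDensity a phi) (Icc a b) :=
  continuous_exp.comp_continuousOn fun _ hx =>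
    (hasDerivWithinAt_integral_Icc hphi hx).continuousWithinAt

lemma hasDerivWithinAt_ninvDensity (hphi : ContinuousOn phi (Icc a b)) (hx : x ∈ Icc a b) :
    HasDerivWithinAt (ninvDensity a phi) (ninvDensity a phi x * phi x) (Icc a b) x :=
  (hasDerivWithinAt_integral_Icc hphi hx).exp

lemma iteratedDerivWithin_one_ninv (hab : a < b) (hphi : ContinuousOn phi (Icc a b))
    (hx : x ∈ Icc a b) :
    iteratedDerivWithin 1 (ninv a b phi) (Icc a b) x =
      (b - a) * ninvDensity a phi x / ninvPrimitive a phi b := by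
  rw [iteratedDerivWithin_one, ninv_eq]
  exact ((((hasDerivWithinAt_integral_Icc (continuousOn_ninvDensity hphi) hx).const_mul
    (b - a)).div_const _).const_add a).derivWithin (uniqueDiffOn_Icc hab x hx)

lemma iteratedDerivWithin_two_ninv (hab : a < b) (hphi : ContinuousOn phi (Icc a b))
    (hx : x ∈ Icc a b) :
    iteratedDerivWithin 2 (ninv a b phi) (Icc a b) x =
      (b - a) * (ninvDensity a phi x * phi x) / ninvPrimitive a phi b := by
  rw [iteratedDerivWithin_succ,
    derivWithin_congr (fun y hy => iteratedDerivWithin_one_ninv hab hphi hy)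
      (iteratedDerivWithin_one_ninv hab hphi hx)]
  exact (((hasDerivWithinAt_ninvDensity hphi hx).const_mul (b - a)).div_const _).derivWithin
    (uniqueDiffOn_Icc hab x hx)

lemma ninvDensity_le (hbphi : ∀ t ∈ Icc a b, |phi t| ≤ M) (hx : x ∈ Icc a b) :
    ninvDensity a phi x ≤ exp (M * (b - a)) :=
  exp_le_exp.2 ((le_abs_self _).trans (abs_integral_le_of_forall_abs_le hbphi hx))

lemma abs_ninvPrimitive_le (hbphi : ∀ t ∈ Icc a b, |phi t| ≤ M) (hx : x ∈ Icc a b) :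
    |ninvPrimitive a phi x| ≤ exp (M * (b - a)) * (b - a) :=
  abs_integral_le_of_forall_abs_le (fun _ ht => by
    rw [abs_of_pos ninvDensity_pos]; exact ninvDensity_le hbphi ht) hx

lemma mul_exp_neg_le_ninvPrimitive (hab : a < b) (hphi : ContinuousOn phi (Icc a b))
    (hbphi : ∀ t ∈ Icc a b, |phi t| ≤ M) :
    (b - a) * exp (-(M * (b - a))) ≤ ninvPrimitive a phi b := by
  have hmono := integral_mono_on (μ := volume) hab.le intervalIntegrable_const
    ((continuousOn_ninvDensity hphi).intervalIntegrable_of_Icc hab.le) fun t ht =>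
      exp_le_exp.2 (neg_le_of_abs_le (abs_integral_le_of_forall_abs_le hbphi ht))
  rwa [intervalIntegral.integral_const, smul_eq_mul] at hmono

lemma abs_ninvDensity_sub_le (hphi : ContinuousOn phi (Icc a b))
    (hpsi : ContinuousOn psi (Icc a b)) (hbphi : ∀ t ∈ Icc a b, |phi t| ≤ M)
    (hbpsi : ∀ t ∈ Icc a b, |psi t| ≤ M) (hδ : ∀ t ∈ Icc a b, |phi t - psi t| ≤ δ)
    (hx : x ∈ Icc a b) :
    |ninvDensity a phi x - ninvDensity a psi x| ≤ exp (M * (b - a)) * (δ * (b - a)) := by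
  have hint : ∀ {f : ℝ → ℝ}, ContinuousOn f (Icc a b) → IntervalIntegrable f volume a x :=
    fun hf => (hf.mono (Icc_subset_Icc_right hx.2)).intervalIntegrable_of_Icc hx.1
  refine (abs_exp_sub_exp_le
    ((le_abs_self _).trans (abs_integral_le_of_forall_abs_le hbphi hx))
    ((le_abs_self _).trans (abs_integral_le_of_forall_abs_le hbpsi hx))).trans ?_
  rw [← integral_sub (hint hphi) (hint hpsi)]
  exact mul_le_mul_of_nonneg_left (abs_integral_le_of_forall_abs_le hδ hx) (exp_pos _).le

lemma abs_ninvPrimitive_sub_le (hphi : ContinuousOn phi (Icc a b))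
    (hpsi : ContinuousOn psi (Icc a b)) (hbphi : ∀ t ∈ Icc a b, |phi t| ≤ M)
    (hbpsi : ∀ t ∈ Icc a b, |psi t| ≤ M) (hδ : ∀ t ∈ Icc a b, |phi t - psi t| ≤ δ)
    (hx : x ∈ Icc a b) :
    |ninvPrimitive a phi x - ninvPrimitive a psi x| ≤
      exp (M * (b - a)) * (δ * (b - a)) * (b - a) := by
  have hint : ∀ {f : ℝ → ℝ}, ContinuousOn f (Icc a b) → IntervalIntegrable f volume a x :=
    fun hf => (hf.mono (Icc_subset_Icc_right hx.2)).intervalIntegrable_of_Icc hx.1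
  rw [ninvPrimitive, ninvPrimitive, ← integral_sub (hint (continuousOn_ninvDensity hphi))
    (hint (continuousOn_ninvDensity hpsi))]
  exact abs_integral_le_of_forall_abs_le
    (fun t ht => abs_ninvDensity_sub_le hphi hpsi hbphi hbpsi hδ ht) hx

lemma abs_mul_div_ninvPrimitive_sub_le (hab : a < b) (hphi : ContinuousOn phi (Icc a b))
    (hpsi : ContinuousOn psi (Icc a b)) (hbphi : ∀ t ∈ Icc a b, |phi t| ≤ M)
    (hbpsi : ∀ t ∈ Icc a b, |psi t| ≤ M) (hδ : ∀ t ∈ Icc a b, |phi t - psi t| ≤ δ)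
    {N₁ N₂ Λ : ℝ} (hN : |N₁ - N₂| ≤ Λ * δ) (hN₂ : |N₂| ≤ Λ) :
    |(b - a) * N₁ / ninvPrimitive a phi b - (b - a) * N₂ / ninvPrimitive a psi b| ≤
      Λ * exp (M * (b - a)) * (1 + (b - a) * exp (M * (b - a)) ^ 2) * δ := by
  have hc : 0 < b - a := sub_pos.2 hab
  have hb : b ∈ Icc a b := right_mem_Icc.2 hab.le
  have hm : 0 < (b - a) * exp (-(M * (b - a))) := by positivity
  have hΛ : 0 ≤ Λ := (abs_nonneg _).trans hN₂
  calc _ ≤ |(b - a) * N₁ - (b - a) * N₂| / ((b - a) * exp (-(M * (b - a)))) +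
        |(b - a) * N₂| * |ninvPrimitive a phi b - ninvPrimitive a psi b| /
          ((b - a) * exp (-(M * (b - a)))) ^ 2 :=
        abs_div_sub_div_le hm (mul_exp_neg_le_ninvPrimitive hab hphi hbphi)
          (mul_exp_neg_le_ninvPrimitive hab hpsi hbpsi)
    _ ≤ (b - a) * (Λ * δ) / ((b - a) * exp (-(M * (b - a)))) +
        (b - a) * Λ * (exp (M * (b - a)) * (δ * (b - a)) * (b - a)) /
          ((b - a) * exp (-(M * (b - a)))) ^ 2 := by
        rw [← mul_sub, abs_mul, abs_mul, abs_of_pos hc]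
        gcongr
        exact abs_ninvPrimitive_sub_le hphi hpsi hbphi hbpsi hδ hb
    _ = Λ * exp (M * (b - a)) * (1 + (b - a) * exp (M * (b - a)) ^ 2) * δ := by
        rw [exp_neg]
        field_simp

lemma abs_iteratedDerivWithin_ninv_sub_le (hab : a < b) (hphi : ContinuousOn phi (Icc a b))
    (hpsi : ContinuousOn psi (Icc a b)) (hbphi : ∀ t ∈ Icc a b, |phi t| ≤ M)
    (hbpsi : ∀ t ∈ Icc a b, |psi t| ≤ M) (hδ : ∀ t ∈ Icc a b, |phi t - psi t| ≤ δ)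
    {k : ℕ} (hk : k ≤ 2) (hx : x ∈ Icc a b) :
    |iteratedDerivWithin k (ninv a b phi) (Icc a b) x -
        iteratedDerivWithin k (ninv a b psi) (Icc a b) x| ≤
      exp (M * (b - a)) * ((1 + (b - a) + M) * (1 + (b - a))) * exp (M * (b - a)) *
        (1 + (b - a) * exp (M * (b - a)) ^ 2) * δ := by
  have hc : 0 ≤ b - a := sub_nonneg.2 hab.le
  have hM : 0 ≤ M := (abs_nonneg _).trans (hbphi x hx)
  have hδ0 : 0 ≤ δ := (abs_nonneg _).trans (hδ x hx)
  have hEψ : |ninvDensity a psi x| ≤ exp (M * (b - a)) := by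
    rw [abs_of_pos ninvDensity_pos]
    exact ninvDensity_le hbpsi hx
  -- `(1 + (b - a) + M) * (1 + (b - a))` dominates the numerator constants of all three cases:
  -- `(b - a) ^ 2`, `b - a`, `1`, `M` and `1 + (b - a) * M`.
  interval_cases k
  · simp only [iteratedDerivWithin_zero, ninv_eq, add_sub_add_left_eq_sub]
    apply abs_mul_div_ninvPrimitive_sub_le hab hphi hpsi hbphi hbpsi hδ
    · calc _ ≤ exp (M * (b - a)) * (δ * (b - a)) * (b - a) :=
            abs_ninvPrimitive_sub_le hphi hpsi hbphi hbpsi hδ hx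
        _ = exp (M * (b - a)) * ((b - a) * (b - a)) * δ := by ring
        _ ≤ _ := by gcongr <;> linarith
    · calc _ ≤ exp (M * (b - a)) * (b - a) := abs_ninvPrimitive_le hbpsi hx
        _ ≤ _ := by gcongr; nlinarith
  · rw [iteratedDerivWithin_one_ninv hab hphi hx, iteratedDerivWithin_one_ninv hab hpsi hx]
    apply abs_mul_div_ninvPrimitive_sub_le hab hphi hpsi hbphi hbpsi hδ
    · calc _ ≤ exp (M * (b - a)) * (δ * (b - a)) :=
            abs_ninvDensity_sub_le hphi hpsi hbphi hbpsi hδ hx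
        _ = exp (M * (b - a)) * (b - a) * δ := by ring
        _ ≤ _ := by gcongr; nlinarith
    · calc _ ≤ exp (M * (b - a)) * 1 := by rw [mul_one]; exact hEψ
        _ ≤ _ := by gcongr; nlinarith
  · rw [iteratedDerivWithin_two_ninv hab hphi hx, iteratedDerivWithin_two_ninv hab hpsi hx]
    apply abs_mul_div_ninvPrimitive_sub_le hab hphi hpsi hbphi hbpsi hδ
    · calc _ ≤ |ninvDensity a phi x - ninvDensity a psi x| * M +
            exp (M * (b - a)) * |phi x - psi x| := abs_mul_sub_mul_le hEψ (hbphi x hx)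
        _ ≤ exp (M * (b - a)) * (δ * (b - a)) * M + exp (M * (b - a)) * δ := by
            gcongr
            exacts [abs_ninvDensity_sub_le hphi hpsi hbphi hbpsi hδ hx, hδ x hx]
        _ = exp (M * (b - a)) * (1 + (b - a) * M) * δ := by ring
        _ ≤ _ := by gcongr; nlinarith
    · calc _ ≤ exp (M * (b - a)) * M := by
            rw [abs_mul]
            exact mul_le_mul hEψ (hbpsi x hx) (abs_nonneg _) (exp_pos _).le
        _ ≤ _ := by gcongr; nlinarith

end ninv

/-- The inverse of the nonlinearity is Lipschitz (into `C^2`) on bounded sets. -/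
theorem ninv_lipschitz (a b : ℝ) (hab : a < b) (M : ℝ) (hM : 0 < M) :
    ∃ K : ℝ, 0 < K ∧
      ∀ phi psi : ℝ → ℝ,
        ContinuousOn phi (Set.Icc a b) → ContinuousOn psi (Set.Icc a b) →
        (∀ x ∈ Set.Icc a b, |phi x| ≤ M) → (∀ x ∈ Set.Icc a b, |psi x| ≤ M) →
        ∀ k ≤ 2, ∀ x ∈ Set.Icc a b,
          |iteratedDerivWithin k (ninv a b phi) (Set.Icc a b) x -
              iteratedDerivWithin k (ninv a b psi) (Set.Icc a b) x| ≤
            K * sSup {y : ℝ | ∃ x ∈ Set.Icc a b, y = |phi x - psi x|} := by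
  have hc : 0 < b - a := sub_pos.2 hab
  refine ⟨_, by positivity, fun phi psi hphi hpsi hbphi hbpsi k hk x hx =>
    abs_iteratedDerivWithin_ninv_sub_le hab hphi hpsi hbphi hbpsi (fun t ht => ?_) hk hx⟩
  refine le_csSup ⟨M + M, ?_⟩ ⟨t, ht, rfl⟩
  rintro _ ⟨u, hu, rfl⟩
  exact (abs_sub _ _).trans (add_le_add (hbphi u hu) (hbpsi u hu))
end

section
/- Let I be a compact interval in the real line with non-empty interior, and let U be an open set in the complex plane containing I. Fix M > 0 and let F be the family of holomorphic functions f : U -> C with |f(z)| <= M for all z in U. Then for every natural number r and every alpha in (0,1) there exists L = L(r, alpha, M, I, U) > 0 such that for all f in F: sup over z in I and n in {0,1,...,r} of |f^{(n)}(z)| <= L * ( sup over z in I of |f(z)| )^alpha. -/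
/-!
The map `ζ ↦ (a + b)/2 + (b - a)/2 · cosh (τ ζ)` sends the imaginary axis onto `[a, b]` and,
for small `τ > 0`, the closed strip `0 ≤ re ζ ≤ 1` into `U`. Hadamard's three lines theorem for
`f` composed with this map bounds `|f|` on the image of `0 ≤ re ζ ≤ 1 - α` by
`(sup_I |f|)^α M^(1-α)`. Since the lines `re ζ = s` go to ellipses with foci `a` and `b`, that
image contains a fixed `δ`-neighbourhood of `[a, b]`, and Cauchy's estimates on discs of radius
`δ` centred on `[a, b]` bound the first `r` derivatives by the same quantity.
-/

open Set

namespace Complex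

theorem cosh_re (z : ℂ) : (cosh z).re = Real.cosh z.re * Real.cos z.im := by
  conv_lhs => rw [← re_add_im z, cosh_add, cosh_mul_I, sinh_mul_I]
  simp [cosh_ofReal_re, cos_ofReal_re, cosh_ofReal_im, sinh_ofReal_im, sin_ofReal_im]

theorem cosh_im (z : ℂ) : (cosh z).im = Real.sinh z.re * Real.sin z.im := by
  conv_lhs => rw [← re_add_im z, cosh_add, cosh_mul_I, sinh_mul_I]
  simp [sinh_ofReal_re, sin_ofReal_re, cosh_ofReal_im, cos_ofReal_im]

theorem norm_cosh_sub_one (z : ℂ) : ‖cosh z - 1‖ = Real.cosh z.re - Real.cos z.im := by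
  have hnonneg : 0 ≤ Real.cosh z.re - Real.cos z.im := by
    linarith [Real.one_le_cosh z.re, Real.cos_le_one z.im]
  rw [← Real.sqrt_sq hnonneg, norm_def, normSq_apply]
  congr 1
  simp only [sub_re, sub_im, one_re, one_im, cosh_re, cosh_im]
  linear_combination (Real.cosh z.re ^ 2 - 1) * Real.sin_sq_add_cos_sq z.im -
    Real.sin z.im ^ 2 * Real.cosh_sq z.re

theorem norm_cosh_add_one (z : ℂ) : ‖cosh z + 1‖ = Real.cosh z.re + Real.cos z.im := by
  have hnonneg : 0 ≤ Real.cosh z.re + Real.cos z.im := by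
    linarith [Real.one_le_cosh z.re, Real.neg_one_le_cos z.im]
  rw [← Real.sqrt_sq hnonneg, norm_def, normSq_apply]
  congr 1
  simp only [add_re, add_im, one_re, one_im, cosh_re, cosh_im]
  linear_combination (Real.cosh z.re ^ 2 - 1) * Real.sin_sq_add_cos_sq z.im -
    Real.sin z.im ^ 2 * Real.cosh_sq z.re

theorem norm_cosh_sub_cos_im_le (z : ℂ) : ‖cosh z - Real.cos z.im‖ ≤ |Real.sinh z.re| := by
  rw [← pow_le_pow_iff_left₀ (norm_nonneg _) (abs_nonneg _) two_ne_zero, Complex.sq_norm,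
    normSq_apply, sq_abs]
  simp only [sub_re, sub_im, ofReal_re, ofReal_im, cosh_re, cosh_im, sub_zero]
  have hcosh : (Real.cosh z.re - 1) ^ 2 ≤ Real.sinh z.re ^ 2 := by
    nlinarith [Real.cosh_sq z.re, Real.one_le_cosh z.re]
  nlinarith [Real.sin_sq_add_cos_sq z.im, sq_nonneg (Real.cos z.im),
    mul_le_mul_of_nonneg_left hcosh (sq_nonneg (Real.cos z.im))]

/-- The focal property of the ellipses `cosh '' {re = x}`, whose foci are `±1`. -/
theorem cosh_re_le_one_add_dist (z : ℂ) {t : ℝ} (ht : t ∈ Icc (-1 : ℝ) 1) :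
    Real.cosh z.re ≤ 1 + dist (cosh z) t := by
  have hsub : ‖cosh z - 1‖ ≤ dist (cosh z) t + (1 - t) := by
    calc ‖cosh z - 1‖ = dist (cosh z) ((1 : ℝ) : ℂ) := by rw [dist_eq, ofReal_one]
      _ ≤ dist (cosh z) t + dist t 1 := by
        rw [← isometry_ofReal.dist_eq t 1]; exact dist_triangle _ _ _
      _ = dist (cosh z) t + (1 - t) := by
        rw [Real.dist_eq, abs_of_nonpos (by linarith [ht.2])]; ring
  have hadd : ‖cosh z + 1‖ ≤ dist (cosh z) t + (1 + t) := by
    calc ‖cosh z + 1‖ = dist (cosh z) ((-1 : ℝ) : ℂ) := by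
          rw [dist_eq, ofReal_neg, ofReal_one, sub_neg_eq_add]
      _ ≤ dist (cosh z) t + dist t (-1) := by
        rw [← isometry_ofReal.dist_eq t (-1)]; exact dist_triangle _ _ _
      _ = dist (cosh z) t + (1 + t) := by
        rw [Real.dist_eq, abs_of_nonneg (by linarith [ht.1])]; ring
  rw [norm_cosh_sub_one] at hsub
  rw [norm_cosh_add_one] at hadd
  linarith

theorem exists_re_nonneg_cosh_eq (q : ℂ) : ∃ ξ : ℂ, 0 ≤ ξ.re ∧ cosh ξ = q := by
  obtain ⟨w, rfl⟩ := cos_surjective q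
  rcases le_total 0 (w * I).re with h | h
  · exact ⟨w * I, h, cosh_mul_I w⟩
  · exact ⟨-(w * I), by simpa using h, by rw [cosh_neg, cosh_mul_I]⟩

end Complex

open Complex Metric HadamardThreeLines

noncomputable def coshStripMap (a b τ : ℝ) (ζ : ℂ) : ℂ :=
  ((a + b) / 2 : ℝ) + ((b - a) / 2 : ℝ) * cosh (τ * ζ)

theorem exists_dist_coshStripMap_le {a b : ℝ} (hab : a ≤ b) (τ : ℝ) (ζ : ℂ) :
    ∃ t ∈ Icc a b, dist (coshStripMap a b τ ζ) t ≤ (b - a) / 2 * |Real.sinh (τ * ζ.re)| := by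
  set w : ℂ := τ * ζ
  have hρ : 0 ≤ (b - a) / 2 := by linarith
  refine ⟨(a + b) / 2 + (b - a) / 2 * Real.cos w.im, ⟨?_, ?_⟩, ?_⟩
  · nlinarith [Real.neg_one_le_cos w.im]
  · nlinarith [Real.cos_le_one w.im]
  · have hdiff : coshStripMap a b τ ζ - ((a + b) / 2 + (b - a) / 2 * Real.cos w.im : ℝ)
        = ((b - a) / 2 : ℝ) * (cosh w - Real.cos w.im) := by
      simp only [coshStripMap, w]; push_cast; ring
    rw [dist_eq, hdiff, norm_mul, norm_real, Real.norm_of_nonneg hρ, ← re_ofReal_mul]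
    exact mul_le_mul_of_nonneg_left (norm_cosh_sub_cos_im_le w) hρ

theorem exists_coshStripMap_eq {a b τ s t : ℝ} (hab : a < b) (hτ : 0 < τ) (hs : 0 ≤ s)
    (ht : t ∈ Icc a b) {z : ℂ} (hz : dist z t ≤ (b - a) / 2 * (Real.cosh (τ * s) - 1)) :
    ∃ ζ : ℂ, ζ.re ∈ Icc 0 s ∧ coshStripMap a b τ ζ = z := by
  set c := (a + b) / 2
  set ρ := (b - a) / 2
  have hρ : 0 < ρ := by simp only [ρ]; linarith
  obtain ⟨ξ, hξ0, hξ⟩ := exists_re_nonneg_cosh_eq ((z - c) / ρ)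
  have ht' : (t - c) / ρ ∈ Icc (-1 : ℝ) 1 := by
    constructor
    · rw [le_div_iff₀ hρ]; simp only [c, ρ]; linarith [ht.1]
    · rw [div_le_one hρ]; simp only [c, ρ]; linarith [ht.2]
  have hdist : dist (cosh ξ) ((t - c) / ρ : ℝ) = dist z t / ρ := by
    rw [hξ, dist_eq, dist_eq]
    push_cast
    rw [div_sub_div_same, sub_sub_sub_cancel_right, norm_div, norm_real,
      Real.norm_of_nonneg hρ.le]
  have hcosh : Real.cosh ξ.re ≤ Real.cosh (τ * s) := by
    have hξt := cosh_re_le_one_add_dist ξ ht'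
    have hzρ : dist z t / ρ ≤ Real.cosh (τ * s) - 1 := (div_le_iff₀' hρ).2 hz
    linarith
  have hξs : ξ.re ≤ τ * s := by
    rw [Real.cosh_le_cosh, abs_of_nonneg hξ0, abs_of_nonneg (by positivity)] at hcosh
    exact hcosh
  refine ⟨ξ / τ, ⟨?_, ?_⟩, ?_⟩
  · rw [div_ofReal_re]; positivity
  · rw [div_ofReal_re, div_le_iff₀ hτ]; linarith
  · have hτ' : (τ : ℂ) ≠ 0 := ofReal_ne_zero.mpr hτ.ne'
    have hρ' : (ρ : ℂ) ≠ 0 := ofReal_ne_zero.mpr hρ.ne'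
    rw [coshStripMap, mul_div_cancel₀ _ hτ', hξ, mul_div_cancel₀ _ hρ']
    ring

theorem exists_mapsTo_coshStripMap {a b : ℝ} (hab : a < b) {U : Set ℂ} (hU : IsOpen U)
    (hIU : (fun t : ℝ => (t : ℂ)) '' Icc a b ⊆ U) :
    ∃ τ > 0, MapsTo (coshStripMap a b τ) (verticalClosedStrip 0 1) U := by
  obtain ⟨ε, hε, hεU⟩ :=
    (isCompact_Icc.image continuous_ofReal).exists_cthickening_subset_open hU hIU
  have hρ : 0 < (b - a) / 2 := by linarith
  set τ := Real.arsinh (ε / ((b - a) / 2))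
  have hτ : 0 < τ := Real.arsinh_pos_iff.mpr (by positivity)
  refine ⟨τ, hτ, fun ζ hζ => hεU ?_⟩
  obtain ⟨t, ht, hdist⟩ := exists_dist_coshStripMap_le hab.le τ ζ
  refine mem_cthickening_of_dist_le _ (t : ℂ) ε _ ⟨t, ht, rfl⟩ (hdist.trans ?_)
  have hsinh : |Real.sinh (τ * ζ.re)| ≤ Real.sinh τ := by
    rw [Real.abs_sinh, Real.sinh_le_sinh, abs_of_nonneg (mul_nonneg hτ.le hζ.1)]
    exact mul_le_of_le_one_right hτ.le hζ.2
  calc (b - a) / 2 * |Real.sinh (τ * ζ.re)| ≤ (b - a) / 2 * Real.sinh τ := by gcongr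
    _ = ε := by rw [Real.sinh_arsinh, mul_div_cancel₀ _ hρ.ne']

theorem rpow_one_sub_mul_rpow_le_of_le {m M x s : ℝ} (hm : 0 ≤ m) (hmM : m ≤ M) (hM : 0 < M)
    (hxs : x ≤ s) (hs : s ≤ 1) : m ^ (1 - x) * M ^ x ≤ m ^ (1 - s) * M ^ s := by
  have hratio (y : ℝ) : m ^ (1 - y) * M ^ y = (m / M) ^ (1 - y) * M := by
    rw [Real.div_rpow hm hM.le, Real.rpow_sub hM, Real.rpow_one]
    field_simp
  rw [hratio, hratio]
  exact mul_le_mul_of_nonneg_right (Real.rpow_le_rpow_of_exponent_ge' (by positivity)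
    ((div_le_one hM).2 hmM) (by linarith) (by linarith)) hM.le

theorem norm_le_rpow_mul_rpow_of_re_mem_Icc {E : Type*} [NormedAddCommGroup E]
    [NormedSpace ℂ E] {h : ℂ → E} {m M s : ℝ}
    (hd : DifferentiableOn ℂ h (verticalClosedStrip 0 1))
    (hM : ∀ z ∈ verticalClosedStrip 0 1, ‖h z‖ ≤ M) (hm : ∀ z : ℂ, z.re = 0 → ‖h z‖ ≤ m)
    (hmM : m ≤ M) (hM0 : 0 < M) (hs : s ≤ 1) {z : ℂ} (hz : z.re ∈ Icc 0 s) :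
    ‖h z‖ ≤ m ^ (1 - s) * M ^ s := by
  have hclosure : closure (verticalStrip 0 1) ⊆ verticalClosedStrip 0 1 :=
    closure_minimal (preimage_mono Ioo_subset_Icc_self) (isClosed_Icc.preimage continuous_re)
  have hm0 : 0 ≤ m := (norm_nonneg _).trans (hm 0 zero_re)
  refine (norm_le_interp_of_mem_verticalClosedStrip₀₁' h ⟨hz.1, hz.2.trans hs⟩
    (hd.mono hclosure).diffContOnCl ⟨M, ?_⟩ hm fun w hw => hM w ?_).trans
    (rpow_one_sub_mul_rpow_le_of_le hm0 hmM hM0 hz.2 hs)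
  · rintro _ ⟨w, hw, rfl⟩
    exact hM w hw
  · simp [verticalClosedStrip, show w.re = 1 from hw]

theorem differentiable_coshStripMap (a b τ : ℝ) : Differentiable ℂ (coshStripMap a b τ) := by
  unfold coshStripMap
  fun_prop

theorem mem_and_norm_le_rpow_mul_rpow_of_dist_le {a b τ m M s t : ℝ} {U : Set ℂ} {f : ℂ → ℂ}
    (hab : a < b) (hτ : 0 < τ) (hmaps : MapsTo (coshStripMap a b τ) (verticalClosedStrip 0 1) U)
    (hf : DifferentiableOn ℂ f U) (hfM : ∀ z ∈ U, ‖f z‖ ≤ M) (hM : 0 < M)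
    (hfm : ∀ x ∈ Icc a b, ‖f x‖ ≤ m) (hmM : m ≤ M) (hs : s ∈ Icc (0 : ℝ) 1) (ht : t ∈ Icc a b)
    {z : ℂ} (hz : dist z t ≤ (b - a) / 2 * (Real.cosh (τ * s) - 1)) :
    z ∈ U ∧ ‖f z‖ ≤ m ^ (1 - s) * M ^ s := by
  obtain ⟨ζ, hζ, rfl⟩ := exists_coshStripMap_eq hab hτ hs.1 ht hz
  have hζU : ζ ∈ verticalClosedStrip 0 1 := ⟨hζ.1, hζ.2.trans hs.2⟩
  refine ⟨hmaps hζU, norm_le_rpow_mul_rpow_of_re_mem_Icc (h := f ∘ coshStripMap a b τ)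
    (hf.comp (differentiable_coshStripMap a b τ).differentiableOn hmaps)
    (fun w hw => hfM _ (hmaps hw)) (fun w hw => ?_) hmM hM hs.2 hζ⟩
  obtain ⟨x, hx, hdist⟩ := exists_dist_coshStripMap_le hab.le τ w
  rw [hw, mul_zero, Real.sinh_zero, abs_zero, mul_zero, dist_le_zero] at hdist
  simpa [hdist] using hfm x hx

open scoped Nat

theorem factorial_div_pow_le_factorial_div_pow {δ : ℝ} (hδ0 : 0 < δ) (hδ1 : δ ≤ 1) {n r : ℕ}
    (hnr : n ≤ r) : (n ! : ℝ) / δ ^ n ≤ r ! / δ ^ r :=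
  div_le_div₀ (by positivity) (by exact_mod_cast Nat.factorial_le hnr) (by positivity)
    (pow_le_pow_of_le_one hδ0.le hδ1 hnr)

/-- The `C^r` norm on a real interval is Hölder-controlled by the `C^0` norm, for
holomorphic functions bounded on a complex neighbourhood of the interval. -/
theorem cr_norm_holder_c0 (a b : ℝ) (hab : a < b) (U : Set ℂ) (hU : IsOpen U)
    (hIU : (fun t : ℝ => (t : ℂ)) '' Set.Icc a b ⊆ U) (M : ℝ) (hM : 0 < M) :
    ∀ (r : ℕ) (alpha : ℝ), alpha ∈ Set.Ioo (0 : ℝ) 1 →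
      ∃ L : ℝ, 0 < L ∧
        ∀ f : ℂ → ℂ, DifferentiableOn ℂ f U → (∀ z ∈ U, ‖f z‖ ≤ M) →
          sSup {y : ℝ | ∃ n ≤ r, ∃ x ∈ Set.Icc a b,
              y = ‖iteratedDeriv n f (x : ℂ)‖} ≤
            L * sSup {y : ℝ | ∃ x ∈ Set.Icc a b, y = ‖f (x : ℂ)‖} ^ alpha := by
  intro r α ⟨hα0, hα1⟩
  obtain ⟨τ, hτ, hmaps⟩ := exists_mapsTo_coshStripMap hab hU hIU
  set δ := min 1 ((b - a) / 2 * (Real.cosh (τ * (1 - α)) - 1))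
  have hδ : 0 < δ := lt_min one_pos (mul_pos (by linarith)
    (sub_pos.2 (Real.one_lt_cosh.2 (mul_pos hτ (by linarith)).ne')))
  refine ⟨r ! / δ ^ r * M ^ (1 - α), by positivity, fun f hf hfM => ?_⟩
  set m := sSup {y : ℝ | ∃ x ∈ Icc a b, y = ‖f (x : ℂ)‖}
  have hfm : ∀ x ∈ Icc a b, ‖f x‖ ≤ m := fun x hx =>
    le_csSup ⟨M, by rintro _ ⟨y, hy, rfl⟩; exact hfM _ (hIU ⟨y, hy, rfl⟩)⟩ ⟨x, hx, rfl⟩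
  have hmM : m ≤ M :=
    Real.sSup_le (by rintro _ ⟨y, hy, rfl⟩; exact hfM _ (hIU ⟨y, hy, rfl⟩)) hM.le
  have hm0 : 0 ≤ m := (norm_nonneg _).trans (hfm a ⟨le_rfl, hab.le⟩)
  have hball : ∀ x ∈ Icc a b, ∀ z ∈ closedBall (x : ℂ) δ,
      z ∈ U ∧ ‖f z‖ ≤ m ^ α * M ^ (1 - α) := by
    intro x hx z hz
    simpa only [sub_sub_cancel] using mem_and_norm_le_rpow_mul_rpow_of_dist_le hab hτ hmaps hf
      hfM hM hfm hmM ⟨by linarith, by linarith⟩ hx ((mem_closedBall.1 hz).trans (min_le_right _ _))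
  refine Real.sSup_le ?_ (by positivity)
  rintro _ ⟨n, hn, x, hx, rfl⟩
  calc ‖iteratedDeriv n f x‖ ≤ n ! * (m ^ α * M ^ (1 - α)) / δ ^ n :=
        norm_iteratedDeriv_le_of_forall_mem_sphere_norm_le n hδ
          (hf.diffContOnCl_ball fun z hz => (hball x hx z hz).1)
          fun z hz => (hball x hx z (sphere_subset_closedBall hz)).2
    _ ≤ r ! / δ ^ r * (m ^ α * M ^ (1 - α)) := by
        rw [mul_div_right_comm]
        exact mul_le_mul_of_nonneg_right
          (factorial_div_pow_le_factorial_div_pow hδ (min_le_left _ _) hn) (by positivity)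
    _ = r ! / δ ^ r * M ^ (1 - α) * m ^ α := by ring
end
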